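/- arXiv:2401.16218 — 6 statements merged into one kernel-verified Lean document; each statement's English description precedes it below -/
import Mathlib

section
/- For a field F with char F ≠ 2 and α ∈ F, the algebra 𝔍(α) is simple, i.e., it has no ideals (F-subspaces I with 𝔍(α)·I ⊆ I) other than {0} and 𝔍(α), if and only if α ∉ {0, 1}. -/
namespace JordanHalf

variable {F : Type*} [Field F]

/-- The multiplication of the 3-dimensional algebra `𝔍(α)` with respect to the basis
`𝔞 = ![1,0,0]`, `𝔟 = ![0,1,0]`, `σ = ![0,0,1]`. -/
def JmulFun (α : F) (u v : Fin 3 → F) : Fin 3 → F :=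
  ![u 0 * v 0 + (u 0 * v 1 + u 1 * v 0) / 2 + (α - 1) / 2 * (u 0 * v 2 + u 2 * v 0),
    u 1 * v 1 + (u 0 * v 1 + u 1 * v 0) / 2 + (α - 1) / 2 * (u 1 * v 2 + u 2 * v 1),
    (u 0 * v 1 + u 1 * v 0) + (α - 1) / 2 * (u 2 * v 2)]

end JordanHalf

open JordanHalf

namespace JordanHalfProof

variable {F : Type*} [Field F]

lemma jsmul (α c : F) (u x : Fin 3 → F) : JmulFun α u (c • x) = c • JmulFun α u x := by
  funext i
  fin_cases i <;> simp [JmulFun, smul_eq_mul] <;> ring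

lemma smul_mem_cancel {I : Submodule F (Fin 3 → F)} {c : F} (hc : c ≠ 0) {v : Fin 3 → F}
    (h : c • v ∈ I) : v ∈ I := by
  have h2 := I.smul_mem c⁻¹ h
  rwa [inv_smul_smul₀ hc] at h2

lemma lemA (hchar : (2:F) ≠ 0) (α : F) (x : Fin 3 → F) :
    (x 0 + α * x 1 + (α-1)/2 * x 2) • (![1,0,0] : Fin 3 → F) =
      (2:F) • JmulFun α ![1,0,0] (JmulFun α ![1,0,0] x) - JmulFun α ![1,0,0] x := by
  have ht : (2:F) * (2:F)⁻¹ = 1 := mul_inv_cancel₀ hchar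
  funext i
  fin_cases i <;> simp [JmulFun, smul_eq_mul]
  · linear_combination (-(x 1) * (α + (2:F)⁻¹)) * ht
  · linear_combination (-(x 1) * (2:F)⁻¹) * ht
  · linear_combination (-(x 1)) * ht

lemma lemA' (hchar : (2:F) ≠ 0) (α : F) (x : Fin 3 → F) :
    (α * x 0 + x 1 + (α-1)/2 * x 2) • (![0,1,0] : Fin 3 → F) =
      (2:F) • JmulFun α ![0,1,0] (JmulFun α ![0,1,0] x) - JmulFun α ![0,1,0] x := by
  have ht : (2:F) * (2:F)⁻¹ = 1 := mul_inv_cancel₀ hchar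
  funext i
  fin_cases i <;> simp [JmulFun, smul_eq_mul]
  · linear_combination (-(x 0) * (2:F)⁻¹) * ht
  · linear_combination (-(x 0) * (α + (2:F)⁻¹)) * ht
  · linear_combination (-(x 0)) * ht

lemma lemB (hchar : (2:F) ≠ 0) (α : F) (x : Fin 3 → F) :
    (2 * x 1 - x 2) • (![-((α-1)/2), 0, 1] : Fin 3 → F) =
      (3:F) • JmulFun α ![1,0,0] x - (2:F) • JmulFun α ![1,0,0] (JmulFun α ![1,0,0] x) - x := by
  have ht : (2:F) * (2:F)⁻¹ = 1 := mul_inv_cancel₀ hchar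
  funext i
  fin_cases i <;> simp [JmulFun, smul_eq_mul]
  · linear_combination (x 1 * (2:F)⁻¹) * ht
  · linear_combination (x 1 * ((2:F)⁻¹ - 1)) * ht
  · linear_combination (x 1) * ht

lemma lemB' (hchar : (2:F) ≠ 0) (α : F) (x : Fin 3 → F) :
    (2 * x 0 - x 2) • (![0, -((α-1)/2), 1] : Fin 3 → F) =
      (3:F) • JmulFun α ![0,1,0] x - (2:F) • JmulFun α ![0,1,0] (JmulFun α ![0,1,0] x) - x := by
  have ht : (2:F) * (2:F)⁻¹ = 1 := mul_inv_cancel₀ hchar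
  funext i
  fin_cases i <;> simp [JmulFun, smul_eq_mul]
  · linear_combination (x 0 * ((2:F)⁻¹ - 1)) * ht
  · linear_combination (x 0 * (2:F)⁻¹) * ht
  · linear_combination (x 0) * ht

lemma lemE (hchar : (2:F) ≠ 0) (α : F) :
    (2:F) • (![0,0,1] : Fin 3 → F) =
      (2:F) • JmulFun α ![1,0,0] ![0,1,0] - ![1,0,0] - ![0,1,0] := by
  have ht : (2:F) * (2:F)⁻¹ = 1 := mul_inv_cancel₀ hchar
  funext i
  fin_cases i <;> simp [JmulFun, smul_eq_mul]
  · linear_combination -ht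
  · linear_combination -ht

end JordanHalfProof

open JordanHalfProof

/-- **Theorem.** For a field `F` with `char F ≠ 2` and `α ∈ F`, the algebra `𝔍(α)` is
simple (its only ideals are `⊥` and `⊤`) if and only if `α ∉ {0, 1}`. -/
theorem Jalg_simple_iff {F : Type*} [Field F] (hchar : (2 : F) ≠ 0) (α : F) :
    (∀ I : Submodule F (Fin 3 → F),
        (∀ u : Fin 3 → F, ∀ x ∈ I, JmulFun α u x ∈ I) → I = ⊥ ∨ I = ⊤) ↔
      (α ≠ 0 ∧ α ≠ 1) := by
  have ht : (2:F) * (2:F)⁻¹ = 1 := mul_inv_cancel₀ hchar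
  constructor
  · intro hsimple
    constructor
    · -- α ≠ 0
      intro h0
      subst h0
      set v : Fin 3 → F := ![1,1,2] with hv
      have hgen : ∀ u : Fin 3 → F, JmulFun (0:F) u v = ((u 0 + u 1 - u 2)/2) • v := by
        intro u
        funext i
        fin_cases i <;> simp [JmulFun, hv, smul_eq_mul]
        · linear_combination (-(u 0)) * ht
        · linear_combination (-(u 1)) * ht
        · linear_combination (-(u 0 + u 1)) * ht
      have hclosed : ∀ u : Fin 3 → F, ∀ y ∈ Submodule.span F {v},
          JmulFun (0:F) u y ∈ Submodule.span F {v} := by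
        intro u y hy
        rw [Submodule.mem_span_singleton] at hy ⊢
        obtain ⟨c, rfl⟩ := hy
        exact ⟨c * ((u 0 + u 1 - u 2)/2), by rw [jsmul, hgen, mul_smul]⟩
      rcases hsimple _ hclosed with h | h
      · have hvmem : v ∈ Submodule.span F {v} := Submodule.mem_span_singleton_self v
        rw [h, Submodule.mem_bot] at hvmem
        have := congrFun hvmem 0
        simp [hv] at this
      · have : (![1,0,0] : Fin 3 → F) ∈ Submodule.span F {v} := h ▸ Submodule.mem_top
        rw [Submodule.mem_span_singleton] at this
        obtain ⟨c, hc⟩ := this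
        have h0 := congrFun hc 0
        have h1 := congrFun hc 1
        simp [hv] at h0 h1
        rw [h0] at h1
        exact one_ne_zero h1
    · -- α ≠ 1
      intro h1
      subst h1
      set v : Fin 3 → F := ![0,0,1] with hv
      have hgen : ∀ u : Fin 3 → F, JmulFun (1:F) u v = 0 := by
        intro u
        funext i
        fin_cases i <;> simp [JmulFun, hv]
      have hclosed : ∀ u : Fin 3 → F, ∀ y ∈ Submodule.span F {v},
          JmulFun (1:F) u y ∈ Submodule.span F {v} := by
        intro u y hy
        rw [Submodule.mem_span_singleton] at hy
        obtain ⟨c, rfl⟩ := hy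
        rw [jsmul, hgen, smul_zero]
        exact zero_mem _
      rcases hsimple _ hclosed with h | h
      · have hvmem : v ∈ Submodule.span F {v} := Submodule.mem_span_singleton_self v
        rw [h, Submodule.mem_bot] at hvmem
        have := congrFun hvmem 2
        simp [hv] at this
      · have : (![1,0,0] : Fin 3 → F) ∈ Submodule.span F {v} := h ▸ Submodule.mem_top
        rw [Submodule.mem_span_singleton] at this
        obtain ⟨c, hc⟩ := this
        have h0 := congrFun hc 0
        simp [hv] at h0
  · rintro ⟨h0, h1⟩ I hI
    by_cases hbot : I = ⊥
    · exact Or.inl hbot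
    right
    obtain ⟨x, hxI, hx0⟩ := Submodule.ne_bot_iff I |>.mp hbot
    have hβ : (α-1)/2 ≠ 0 := div_ne_zero (sub_ne_zero.mpr h1) hchar
    have h1' : α - 1 ≠ 0 := sub_ne_zero.mpr h1
    -- key facts
    have key : ∀ y ∈ I, (y 0 + α * y 1 + (α-1)/2 * y 2) • (![1,0,0] : Fin 3 → F) ∈ I := by
      intro y hy
      rw [lemA hchar]
      exact I.sub_mem (I.smul_mem _ (hI _ _ (hI _ _ hy))) (hI _ _ hy)
    have key' : ∀ y ∈ I, (α * y 0 + y 1 + (α-1)/2 * y 2) • (![0,1,0] : Fin 3 → F) ∈ I := by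
      intro y hy
      rw [lemA' hchar]
      exact I.sub_mem (I.smul_mem _ (hI _ _ (hI _ _ hy))) (hI _ _ hy)
    have keyB : ∀ y ∈ I, (2 * y 1 - y 2) • (![-((α-1)/2), 0, 1] : Fin 3 → F) ∈ I := by
      intro y hy
      rw [lemB hchar]
      exact I.sub_mem (I.sub_mem (I.smul_mem _ (hI _ _ hy))
        (I.smul_mem _ (hI _ _ (hI _ _ hy)))) hy
    have keyB' : ∀ y ∈ I, (2 * y 0 - y 2) • (![0, -((α-1)/2), 1] : Fin 3 → F) ∈ I := by
      intro y hy
      rw [lemB' hchar]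
      exact I.sub_mem (I.sub_mem (I.smul_mem _ (hI _ _ hy))
        (I.smul_mem _ (hI _ _ (hI _ _ hy)))) hy
    -- one of the two basis vectors e0, e1 lies in I
    have hmem : (![1,0,0] : Fin 3 → F) ∈ I ∨ (![0,1,0] : Fin 3 → F) ∈ I := by
      by_cases hf : x 0 + α * x 1 + (α-1)/2 * x 2 ≠ 0
      · exact Or.inl (smul_mem_cancel hf (key x hxI))
      by_cases hg : α * x 0 + x 1 + (α-1)/2 * x 2 ≠ 0
      · exact Or.inr (smul_mem_cancel hg (key' x hxI))
      by_cases hr : 2 * x 1 - x 2 ≠ 0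
      · have hw : (![-((α-1)/2), 0, 1] : Fin 3 → F) ∈ I :=
          smul_mem_cancel hr (keyB x hxI)
        have h2 := key' _ hw
        have hcoef : α * (![-((α-1)/2), 0, 1] : Fin 3 → F) 0
            + (![-((α-1)/2), 0, 1] : Fin 3 → F) 1
            + (α-1)/2 * (![-((α-1)/2), 0, 1] : Fin 3 → F) 2 = (α-1)/2 * (1 - α) := by
          simp
          ring
        rw [hcoef] at h2
        exact Or.inr (smul_mem_cancel (mul_ne_zero hβ (by
          intro h; exact h1 (by linear_combination -h))) h2)
      by_cases hq : 2 * x 0 - x 2 ≠ 0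
      · have hw : (![0, -((α-1)/2), 1] : Fin 3 → F) ∈ I :=
          smul_mem_cancel hq (keyB' x hxI)
        have h2 := key _ hw
        have hcoef : (![0, -((α-1)/2), 1] : Fin 3 → F) 0
            + α * (![0, -((α-1)/2), 1] : Fin 3 → F) 1
            + (α-1)/2 * (![0, -((α-1)/2), 1] : Fin 3 → F) 2 = (α-1)/2 * (1 - α) := by
          simp
          ring
        rw [hcoef] at h2
        exact Or.inl (smul_mem_cancel (mul_ne_zero hβ (by
          intro h; exact h1 (by linear_combination -h))) h2)
      -- all functionals vanish: x = 0, contradiction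
      exfalso
      push_neg at hf hg hr hq
      have heq : x 0 = x 1 := by
        have h01 : (1 - α) * (x 0 - x 1) = 0 := by linear_combination hf - hg
        rcases mul_eq_zero.mp h01 with h | h
        · exact absurd (show α = 1 by linear_combination -h) h1
        · exact sub_eq_zero.mp h
      have h2' : x 2 = 2 * x 1 := by linear_combination -hr
      have h4 : (4:F) * α * x 1 = 0 := by
        linear_combination (2:F) * hf - 2 * heq - (2 * ((α-1) * (2:F)⁻¹)) * h2'
          - (2 * (α-1) * x 1) * ht
      have h4ne : (4:F) * α ≠ 0 := by
        have : (4:F) ≠ 0 := by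
          have := mul_ne_zero hchar hchar
          norm_num at this ⊢
          exact this
        exact mul_ne_zero this h0
      have hx1 : x 1 = 0 := by
        rcases mul_eq_zero.mp h4 with h | h
        · exact absurd h h4ne
        · exact h
      apply hx0
      funext i
      fin_cases i <;> simp
      · rw [heq]; exact hx1
      · exact hx1
      · rw [h2', hx1, mul_zero]
    -- both e0 and e1 are in I
    have he0e1 : (![1,0,0] : Fin 3 → F) ∈ I ∧ (![0,1,0] : Fin 3 → F) ∈ I := by
      rcases hmem with h | h
      · refine ⟨h, ?_⟩
        have h2 := key' _ h
        have hcoef : α * (![1,0,0] : Fin 3 → F) 0 + (![1,0,0] : Fin 3 → F) 1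
            + (α-1)/2 * (![1,0,0] : Fin 3 → F) 2 = α := by simp
        rw [hcoef] at h2
        exact smul_mem_cancel h0 h2
      · refine ⟨?_, h⟩
        have h2 := key _ h
        have hcoef : (![0,1,0] : Fin 3 → F) 0 + α * (![0,1,0] : Fin 3 → F) 1
            + (α-1)/2 * (![0,1,0] : Fin 3 → F) 2 = α := by simp
        rw [hcoef] at h2
        exact smul_mem_cancel h0 h2
    obtain ⟨he0, he1⟩ := he0e1
    have he2 : (![0,0,1] : Fin 3 → F) ∈ I := by
      apply smul_mem_cancel hchar
      rw [lemE hchar α]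
      exact I.sub_mem (I.sub_mem (I.smul_mem _ (hI _ _ he1)) he0) he1
    rw [eq_top_iff]
    intro v _
    have hv : v = v 0 • (![1,0,0] : Fin 3 → F) + v 1 • (![0,1,0] : Fin 3 → F)
        + v 2 • (![0,0,1] : Fin 3 → F) := by
      funext i
      fin_cases i <;> simp
    rw [hv]
    exact I.add_mem (I.add_mem (I.smul_mem _ he0) (I.smul_mem _ he1)) (I.smul_mem _ he2)
end

section
/- Let F be a field with char F ≠ 2. (a) In 𝔍(0), the 1-dimensional subspace I = F·((1/2)𝔞 + (1/2)𝔟 + σ) is an ideal, I is contained in every nonzero ideal of 𝔍(0), and in the quotient 𝔍(0)/I the images of 𝔞 and 𝔟 satisfy 𝔞·𝔟 ∈ I and span the quotient, so 𝔍(0)/I ≅ F ⊕ F with componentwise product. (b) In 𝔍(1), σ annihilates the whole algebra (σ·𝔍(1) = 0), and the only ideals of 𝔍(1) other than {0} and 𝔍(1) are F·σ and F·(𝔞−𝔟) + F·σ. -/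
namespace JordanHalf

variable {F : Type*} [Field F]

/-- `I` is an ideal for the multiplication `JmulFun α`. -/
def IsIdeal (α : F) (I : Submodule F (Fin 3 → F)) : Prop :=
  ∀ u : Fin 3 → F, ∀ x ∈ I, JmulFun α u x ∈ I

end JordanHalf

open JordanHalf

/-!
In `𝔍(0)` the linear map `φ x = (x₀ - x₂/2, x₁ - x₂/2)` is multiplicative onto `F × F` with
kernel `I = F·(½𝔞 + ½𝔟 + σ)`, which is therefore an ideal with quotient `F ⊕ F`. Minimality of `I`
comes from `𝔟(𝔞x)` and `𝔞(𝔟x)` always lying in `I`: an ideal avoiding `I` forces these coefficients,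
and that of `𝔟(𝔞(𝔞x))`, to vanish for each of its elements, which leaves only `x = 0`.

In `𝔍(1)` the functional `t x = x₀ + x₁` is multiplicative with kernel `F·(𝔞 - 𝔟) + F·σ`.
An ideal containing some `x` with `t x ≠ 0` contains `𝔞 = (2𝔞(𝔞x) - 𝔞x) / t x`, likewise `𝔟`, and
hence everything; an ideal inside `ker t` but not inside `F·σ` contains `𝔞 - 𝔟` and `σ`.
-/

namespace JordanHalf

variable {F : Type*} [Field F]

open Submodule

theorem isIdeal_ker {R : Type*} [Semiring R] [Module F R] {α : F}
    (φ : (Fin 3 → F) →ₗ[F] R) (hφ : ∀ u v, φ (JmulFun α u v) = φ u * φ v) :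
    IsIdeal α (LinearMap.ker φ) := by
  intro u x hx
  rw [LinearMap.mem_ker] at hx ⊢
  rw [hφ, hx, mul_zero]

theorem eq_zero_of_smul_mem_of_notMem {M : Type*} [AddCommGroup M] [Module F M]
    {P : Submodule F M} {c : F} {w : M}
    (hcw : c • w ∈ P) (hw : w ∉ P) : c = 0 := by
  by_contra hc
  exact hw ((P.smul_mem_iff hc).1 hcw)

section Zero

def quotientMap : (Fin 3 → F) →ₗ[F] F × F where
  toFun x := (x 0 - x 2 / 2, x 1 - x 2 / 2)
  map_add' x y := by simp only [Pi.add_apply, Prod.mk_add_mk]; ring_nf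
  map_smul' c x := by simp only [Pi.smul_apply, smul_eq_mul, RingHom.id_apply, Prod.smul_mk]; ring_nf

@[simp]
theorem quotientMap_apply (x : Fin 3 → F) : quotientMap x = (x 0 - x 2 / 2, x 1 - x 2 / 2) :=
  rfl

theorem quotientMap_mul (u v : Fin 3 → F) :
    quotientMap (JmulFun 0 u v) = quotientMap u * quotientMap v := by
  simp only [quotientMap_apply, JmulFun, Prod.mk_mul_mk, Prod.ext_iff]
  constructor <;> simp <;> ring

theorem quotientMap_surjective : Function.Surjective (quotientMap (F := F)) :=
  fun p ↦ ⟨![p.1, p.2, 0], by simp⟩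

theorem ker_quotientMap : LinearMap.ker (quotientMap (F := F)) = span F {![2⁻¹, 2⁻¹, 1]} := by
  ext z
  simp only [LinearMap.mem_ker, quotientMap_apply, Prod.mk_eq_zero, mem_span_singleton]
  constructor
  · rintro ⟨h0, h1⟩
    rw [sub_eq_zero] at h0 h1
    exact ⟨z 2, funext fun i ↦ by fin_cases i <;> simp [h0, h1, div_eq_mul_inv, mul_comm]⟩
  · rintro ⟨c, rfl⟩
    simp [div_eq_mul_inv]

theorem mul_a_b : JmulFun 0 ![1, 0, 0] ![0, 1, 0] = ![(2 : F)⁻¹, 2⁻¹, 1] := by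
  funext i; fin_cases i <;> simp [JmulFun]

theorem mul_b_mul_a (x : Fin 3 → F) :
    JmulFun 0 ![0, 1, 0] (JmulFun 0 ![1, 0, 0] x)
      = (x 0 + x 1 / 2 - x 2 / 2) • ![(2 : F)⁻¹, 2⁻¹, 1] := by
  funext i; fin_cases i <;> simp [JmulFun] <;> ring

theorem mul_a_mul_b (x : Fin 3 → F) :
    JmulFun 0 ![1, 0, 0] (JmulFun 0 ![0, 1, 0] x)
      = (x 1 + x 0 / 2 - x 2 / 2) • ![(2 : F)⁻¹, 2⁻¹, 1] := by
  funext i; fin_cases i <;> simp [JmulFun] <;> ring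

theorem span_le_of_isIdeal_zero (hchar : (2 : F) ≠ 0) {P : Submodule F (Fin 3 → F)}
    (hP : IsIdeal 0 P) (hne : P ≠ ⊥) : span F {![(2 : F)⁻¹, 2⁻¹, 1]} ≤ P := by
  rw [span_singleton_le_iff_mem]
  by_contra hw
  have hba : ∀ y ∈ P, y 0 + y 1 / 2 - y 2 / 2 = 0 := fun y hy ↦
    eq_zero_of_smul_mem_of_notMem (mul_b_mul_a y ▸ hP _ _ (hP _ _ hy)) hw
  have hab : ∀ y ∈ P, y 1 + y 0 / 2 - y 2 / 2 = 0 := fun y hy ↦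
    eq_zero_of_smul_mem_of_notMem (mul_a_mul_b y ▸ hP _ _ (hP _ _ hy)) hw
  obtain ⟨x, hx, hx_ne⟩ := (Submodule.ne_bot_iff P).1 hne
  have h₁ := hba x hx
  have h₂ := hab x hx
  have h₃ := hba _ (hP ![1, 0, 0] x hx)
  simp only [JmulFun, Matrix.cons_val_zero, Matrix.cons_val_one, Matrix.cons_val, one_mul,
    zero_mul, mul_zero, add_zero, zero_add, zero_sub] at h₃
  field_simp at h₁ h₂ h₃
  have hx1 : x 1 = 0 := by linear_combination 2 * h₁ - h₃
  have hx0 : x 0 = 0 := by linear_combination h₁ - h₂ + hx1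
  have hx2 : x 2 = 0 := by linear_combination -h₁ + 2 * hx0 + hx1
  exact hx_ne (funext fun i ↦ by fin_cases i <;> simp [*])

theorem exists_quotientEquiv :
    ∃ e : ((Fin 3 → F) ⧸ span F {(![2⁻¹, 2⁻¹, 1] : Fin 3 → F)}) ≃ₗ[F] F × F,
      ∀ x, e (Submodule.Quotient.mk x) = quotientMap x :=
  ⟨(quotEquivOfEq _ _ ker_quotientMap.symm).trans
    (quotientMap.quotKerEquivOfSurjective quotientMap_surjective), fun _ ↦ rfl⟩

end Zero

section One

def traceForm : (Fin 3 → F) →ₗ[F] F where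
  toFun x := x 0 + x 1
  map_add' x y := by simp only [Pi.add_apply]; ring
  map_smul' c x := by simp only [Pi.smul_apply, smul_eq_mul, RingHom.id_apply]; ring

@[simp]
theorem traceForm_apply (x : Fin 3 → F) : traceForm x = x 0 + x 1 :=
  rfl

theorem traceForm_mul (hchar : (2 : F) ≠ 0) (u v : Fin 3 → F) :
    traceForm (JmulFun 1 u v) = traceForm u * traceForm v := by
  simp only [traceForm_apply, JmulFun, Matrix.cons_val_zero, Matrix.cons_val_one, sub_self,
    zero_div, zero_mul, add_zero]
  field_simp
  ring

theorem ker_traceForm :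
    LinearMap.ker (traceForm (F := F)) = span F {![1, -1, 0], ![0, 0, 1]} := by
  ext z
  simp only [LinearMap.mem_ker, traceForm_apply, mem_span_pair]
  constructor
  · intro h
    rw [add_eq_zero_iff_eq_neg'] at h
    exact ⟨z 0, z 2, funext fun i ↦ by fin_cases i <;> simp [h]⟩
  · rintro ⟨c, d, rfl⟩
    simp

theorem mem_span_sigma_iff {x : Fin 3 → F} :
    x ∈ span F {![0, 0, 1]} ↔ x 0 = 0 ∧ x 1 = 0 := by
  simp only [mem_span_singleton]
  constructor
  · rintro ⟨c, rfl⟩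
    simp
  · rintro ⟨h0, h1⟩
    exact ⟨x 2, funext fun i ↦ by fin_cases i <;> simp [h0, h1]⟩

theorem JmulFun_one_sigma (u : Fin 3 → F) : JmulFun 1 u ![0, 0, 1] = 0 := by
  funext i; fin_cases i <;> simp [JmulFun]

theorem isIdeal_span_sigma : IsIdeal (1 : F) (span F {![0, 0, 1]}) := by
  intro u x hx
  rw [mem_span_sigma_iff] at hx ⊢
  simp [JmulFun, hx.1, hx.2]

theorem isAtom_span_sigma : IsAtom (span F {(![0, 0, 1] : Fin 3 → F)}) :=
  nonzero_span_atom _ fun h ↦ by simpa using congrFun h 2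

theorem span_sigma_lt_span_pair :
    span F {(![0, 0, 1] : Fin 3 → F)} < span F {![1, -1, 0], ![0, 0, 1]} := by
  refine SetLike.lt_iff_le_and_exists.2
    ⟨span_mono (by simp), ![1, -1, 0], subset_span (by simp), ?_⟩
  simp [mem_span_sigma_iff]

theorem span_pair_lt_top : span F {(![1, -1, 0] : Fin 3 → F), ![0, 0, 1]} < ⊤ := by
  rw [lt_top_iff_ne_top, ← ker_traceForm, Ne, LinearMap.ker_eq_top]
  exact fun h ↦ by simpa using LinearMap.congr_fun h ![1, 0, 0]

theorem eq_top_of_traceForm_ne_zero (hchar : (2 : F) ≠ 0) {P : Submodule F (Fin 3 → F)}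
    (hP : IsIdeal 1 P) {x : Fin 3 → F} (hx : x ∈ P) (ht : traceForm x ≠ 0) : P = ⊤ := by
  have idem_mem : ∀ e : Fin 3 → F, (2 : F) • JmulFun 1 e (JmulFun 1 e x) - JmulFun 1 e x =
      traceForm x • e → e ∈ P := fun e he ↦
    (P.smul_mem_iff ht).1 (he ▸ P.sub_mem (P.smul_mem 2 (hP _ _ (hP _ _ hx))) (hP _ _ hx))
  have ha : ![1, 0, 0] ∈ P := idem_mem _ <| by
    funext i; fin_cases i <;> simp [JmulFun] <;> field_simp <;> ring
  have hb : ![0, 1, 0] ∈ P := idem_mem _ <| by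
    funext i; fin_cases i <;> simp [JmulFun] <;> field_simp <;> ring
  have hσ : ![0, 0, 1] ∈ P := by
    have : JmulFun 1 ![0, 1, 0] ![1, 0, 0] - (2 : F)⁻¹ • ![1, 0, 0] - (2 : F)⁻¹ • ![0, 1, 0]
        = ![(0 : F), 0, 1] := by
      funext i; fin_cases i <;> simp [JmulFun]
    exact this ▸ P.sub_mem (P.sub_mem (hP _ _ ha) (P.smul_mem _ ha)) (P.smul_mem _ hb)
  refine eq_top_iff.2 fun v _ ↦ ?_
  have hv : v = v 0 • ![1, 0, 0] + v 1 • ![0, 1, 0] + v 2 • ![0, 0, 1] := by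
    funext i; fin_cases i <;> simp
  rw [hv]
  exact P.add_mem (P.add_mem (P.smul_mem _ ha) (P.smul_mem _ hb)) (P.smul_mem _ hσ)

theorem span_pair_le_of_mem (hchar : (2 : F) ≠ 0) {P : Submodule F (Fin 3 → F)}
    (hP : IsIdeal 1 P) {x : Fin 3 → F} (hx : x ∈ P) (ht : traceForm x = 0) (hx0 : x 0 ≠ 0) :
    span F {![1, -1, 0], ![0, 0, 1]} ≤ P := by
  have hx1 : x 1 = -x 0 := by rw [traceForm_apply] at ht; linear_combination ht
  have hσ : ![0, 0, 1] ∈ P := by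
    have : JmulFun 1 ![0, 1, 0] x - JmulFun 1 ![1, 0, 0] x = (2 * x 0) • ![(0 : F), 0, 1] := by
      funext i; fin_cases i <;> simp [JmulFun, hx1] <;> field_simp <;> ring
    exact (P.smul_mem_iff (mul_ne_zero hchar hx0)).1
      (this ▸ P.sub_mem (hP _ _ hx) (hP _ _ hx))
  have hab : ![1, -1, 0] ∈ P := by
    have : JmulFun 1 ![1, 0, 0] x + JmulFun 1 ![0, 1, 0] x = x 0 • ![(1 : F), -1, 0] := by
      funext i; fin_cases i <;> simp [JmulFun, hx1] <;> field_simp <;> ring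
    exact (P.smul_mem_iff hx0).1 (this ▸ P.add_mem (hP _ _ hx) (hP _ _ hx))
  rw [span_le, Set.insert_subset_iff, Set.singleton_subset_iff]
  exact ⟨hab, hσ⟩

theorem isIdeal_one_eq_bot_or_top_or_span (hchar : (2 : F) ≠ 0) {P : Submodule F (Fin 3 → F)}
    (hP : IsIdeal 1 P) :
    P = ⊥ ∨ P = ⊤ ∨ P = span F {![0, 0, 1]} ∨ P = span F {![1, -1, 0], ![0, 0, 1]} := by
  by_cases htop : ∃ x ∈ P, traceForm x ≠ 0
  · obtain ⟨x, hx, ht⟩ := htop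
    exact .inr <| .inl <| eq_top_of_traceForm_ne_zero hchar hP hx ht
  push Not at htop
  have hle_pair : P ≤ span F {![1, -1, 0], ![0, 0, 1]} := by
    rwa [← ker_traceForm]
  by_cases hpair : ∃ x ∈ P, x 0 ≠ 0
  · obtain ⟨x, hx, hx0⟩ := hpair
    exact .inr <| .inr <| .inr <|
      hle_pair.antisymm (span_pair_le_of_mem hchar hP hx (htop x hx) hx0)
  push Not at hpair
  have hle_sigma : P ≤ span F {![0, 0, 1]} := fun x hx ↦ by
    have ht := htop x hx
    simp only [traceForm_apply, hpair x hx, zero_add] at ht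
    exact mem_span_sigma_iff.2 ⟨hpair x hx, ht⟩
  rcases isAtom_span_sigma.le_iff.1 hle_sigma with h | h
  · exact .inl h
  · exact .inr <| .inr <| .inl h

end One

end JordanHalf

/-- **Theorem (ideals of `𝔍(0)` and `𝔍(1)`).**
(a) In `𝔍(0)` the line `I = F·(½𝔞 + ½𝔟 + σ)` is an ideal contained in every nonzero ideal;
the images of `𝔞` and `𝔟` in the quotient `𝔍(0)/I` satisfy `𝔞⬝𝔟 ∈ I` and the quotient is
isomorphic to `F ⊕ F` with componentwise product, via an isomorphism sending `𝔞`, `𝔟` to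
`(1,0)`, `(0,1)`.
(b) In `𝔍(1)`, `σ` annihilates the whole algebra, and the only ideals of `𝔍(1)` besides `⊥`
and `⊤` are `F·σ` and `F·(𝔞 − 𝔟) + F·σ`. -/
theorem Jalg_zero_and_one_ideals {F : Type*} [Field F] (hchar : (2 : F) ≠ 0) :
    -- (a) the ideal `I` of `𝔍(0)`
    (IsIdeal (0 : F) (Submodule.span F {(![2⁻¹, 2⁻¹, 1] : Fin 3 → F)}) ∧
      (∀ P : Submodule F (Fin 3 → F), IsIdeal (0 : F) P → P ≠ ⊥ →
        Submodule.span F {(![2⁻¹, 2⁻¹, 1] : Fin 3 → F)} ≤ P) ∧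
      JmulFun (0 : F) ![1, 0, 0] ![0, 1, 0] ∈
        Submodule.span F {(![2⁻¹, 2⁻¹, 1] : Fin 3 → F)} ∧
      (∃ e : ((Fin 3 → F) ⧸ Submodule.span F {(![2⁻¹, 2⁻¹, 1] : Fin 3 → F)}) ≃ₗ[F] (F × F),
        e (Submodule.Quotient.mk ![1, 0, 0]) = (1, 0) ∧
        e (Submodule.Quotient.mk ![0, 1, 0]) = (0, 1) ∧
        ∀ u v : Fin 3 → F,
          e (Submodule.Quotient.mk (JmulFun (0 : F) u v)) =
            e (Submodule.Quotient.mk u) * e (Submodule.Quotient.mk v))) ∧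
    -- (b) `𝔍(1)`
    ((∀ u : Fin 3 → F, JmulFun (1 : F) u ![0, 0, 1] = 0) ∧
      IsIdeal (1 : F) (Submodule.span F {(![0, 0, 1] : Fin 3 → F)}) ∧
      Submodule.span F {(![0, 0, 1] : Fin 3 → F)} ≠ ⊥ ∧
      Submodule.span F {(![0, 0, 1] : Fin 3 → F)} ≠ ⊤ ∧
      IsIdeal (1 : F) (Submodule.span F {![1, -1, 0], ![0, 0, 1]}) ∧
      Submodule.span F {(![1, -1, 0] : Fin 3 → F), ![0, 0, 1]} ≠ ⊥ ∧
      Submodule.span F {(![1, -1, 0] : Fin 3 → F), ![0, 0, 1]} ≠ ⊤ ∧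
      ∀ P : Submodule F (Fin 3 → F), IsIdeal (1 : F) P →
        P = ⊥ ∨ P = ⊤ ∨ P = Submodule.span F {![0, 0, 1]} ∨
          P = Submodule.span F {![1, -1, 0], ![0, 0, 1]}) := by
  obtain ⟨e, he⟩ := exists_quotientEquiv (F := F)
  have hsigma_lt_top := span_sigma_lt_span_pair.trans (span_pair_lt_top (F := F))
  refine ⟨⟨ker_quotientMap (F := F) ▸ isIdeal_ker _ quotientMap_mul,
      fun P hP hne ↦ span_le_of_isIdeal_zero hchar hP hne,
      mul_a_b (F := F) ▸ Submodule.mem_span_singleton_self _,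
      e, by simp [he], by simp [he], fun u v ↦ by simp only [he, quotientMap_mul]⟩,
    JmulFun_one_sigma, isIdeal_span_sigma, isAtom_span_sigma.1, hsigma_lt_top.ne,
    ker_traceForm (F := F) ▸ isIdeal_ker _ (traceForm_mul hchar),
    (isAtom_span_sigma.bot_lt.trans span_sigma_lt_span_pair).ne', span_pair_lt_top.ne,
    fun P hP ↦ isIdeal_one_eq_bot_or_top_or_span hchar hP⟩
end

section
/- Let F be a field with char F ≠ 2, δ ∈ F, and in the spin factor 𝔖(δ) set a = (1/2)(1 + u) and b = (1/2)(1 + v). (a) If δ ≠ 1 then a and b generate 𝔖(δ) and there is an F-algebra isomorphism from 𝔍((1+δ)/2) onto 𝔖(δ) sending 𝔞 to a and 𝔟 to b. (b) If δ = 1 then the subalgebra generated by a and b equals the 2-dimensional span of a and b, with a·b = (1/2)a + (1/2)b. -/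
namespace JordanHalf

variable {F : Type*} [Field F]

/-- The multiplication of the spin factor `𝔖(δ)` with respect to the basis
`1 = ![1,0,0]`, `u = ![0,1,0]`, `v = ![0,0,1]`, where the bilinear form on `V = ⟨u,v⟩`
satisfies `b(u,u) = 1 = b(v,v)` and `b(u,v) = δ`. -/
def SmulFun (δ : F) (x y : Fin 3 → F) : Fin 3 → F :=
  ![x 0 * y 0 + x 1 * y 1 + x 2 * y 2 + δ * (x 1 * y 2 + x 2 * y 1),
    x 0 * y 1 + y 0 * x 1,
    x 0 * y 2 + y 0 * x 2]

/-- The subalgebra (submodule closed under the multiplication `mul`) generated by `S`. -/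
def genByFun (mul : (Fin 3 → F) → (Fin 3 → F) → (Fin 3 → F)) (S : Set (Fin 3 → F)) :
    Submodule F (Fin 3 → F) :=
  sInf {P : Submodule F (Fin 3 → F) | S ⊆ P ∧ ∀ x ∈ P, ∀ y ∈ P, mul x y ∈ P}

end JordanHalf

open JordanHalf

lemma h4inv {F : Type*} [Field F] : (4 : F)⁻¹ = 2⁻¹ * 2⁻¹ := by
  rw [show (4 : F) = 2 * 2 by norm_num, mul_inv]

/-- The linear equivalence underlying the isomorphism `𝔍((1+δ)/2) ≅ 𝔖(δ)`. -/
def eEquiv {F : Type*} [Field F] (δ : F) (h1 : δ - 1 ≠ 0) (h2 : (2 : F) ≠ 0) :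
    (Fin 3 → F) ≃ₗ[F] (Fin 3 → F) where
  toFun x := ![x 0 / 2 + x 1 / 2 + x 2 * (δ - 1) / 4, x 0 / 2, x 1 / 2]
  map_add' x y := by
    funext i
    fin_cases i <;> simp <;> ring
  map_smul' c x := by
    funext i
    fin_cases i <;> simp <;> ring
  invFun y := ![2 * y 1, 2 * y 2, (y 0 - y 1 - y 2) * 4 / (δ - 1)]
  left_inv x := by
    have hi2 : (2 : F) * 2⁻¹ = 1 := mul_inv_cancel₀ h2
    have his : (δ - 1) * (δ - 1)⁻¹ = 1 := mul_inv_cancel₀ h1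
    funext i
    fin_cases i
    · show 2 * _ = x 0
      simp only [Fin.zero_eta, Fin.mk_one, Fin.reduceFinMk, Matrix.cons_val_zero, Matrix.cons_val_one, Matrix.head_cons, div_eq_mul_inv]
      linear_combination (x 0) * hi2
    · show 2 * _ = x 1
      simp only [Fin.zero_eta, Fin.mk_one, Fin.reduceFinMk, Matrix.cons_val_zero, Matrix.cons_val_one, Matrix.head_cons,
        Matrix.cons_val_two, Matrix.tail_cons, div_eq_mul_inv]
      linear_combination (x 1) * hi2
    · show (_ - _ - _) * 4 / (δ - 1) = x 2
      simp only [Fin.zero_eta, Fin.mk_one, Fin.reduceFinMk, Matrix.cons_val_zero, Matrix.cons_val_one, Matrix.head_cons,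
        Matrix.cons_val_two, Matrix.tail_cons, div_eq_mul_inv, h4inv]
      linear_combination (-(δ-1)⁻¹*x 2 + (δ-1)⁻¹*δ*x 2 + (-2)*(2:F)⁻¹*(δ-1)⁻¹*x 2
        + (2)*(2:F)⁻¹*(δ-1)⁻¹*δ*x 2) * hi2 + (x 2) * his
  right_inv y := by
    have hi2 : (2 : F) * 2⁻¹ = 1 := mul_inv_cancel₀ h2
    have his : (δ - 1) * (δ - 1)⁻¹ = 1 := mul_inv_cancel₀ h1
    funext i
    fin_cases i
    · show _ / 2 + _ / 2 + _ * (δ - 1) / 4 = y 0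
      simp only [Fin.zero_eta, Fin.mk_one, Fin.reduceFinMk, Matrix.cons_val_zero, Matrix.cons_val_one, Matrix.head_cons,
        Matrix.cons_val_two, Matrix.tail_cons, div_eq_mul_inv, h4inv]
      linear_combination (y 2 + y 1 + (δ-1)⁻¹*y 2 + (δ-1)⁻¹*y 1 - (δ-1)⁻¹*y 0
        - (δ-1)⁻¹*δ*y 2 - (δ-1)⁻¹*δ*y 1 + (δ-1)⁻¹*δ*y 0 + (2)*(2:F)⁻¹*(δ-1)⁻¹*y 2
        + (2)*(2:F)⁻¹*(δ-1)⁻¹*y 1 + (-2)*(2:F)⁻¹*(δ-1)⁻¹*y 0 + (-2)*(2:F)⁻¹*(δ-1)⁻¹*δ*y 2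
        + (-2)*(2:F)⁻¹*(δ-1)⁻¹*δ*y 1 + (2)*(2:F)⁻¹*(δ-1)⁻¹*δ*y 0) * hi2
        + (-y 2 - y 1 + y 0) * his
    · show _ / 2 = y 1
      simp only [Fin.zero_eta, Fin.mk_one, Fin.reduceFinMk, Matrix.cons_val_zero, Matrix.cons_val_one, Matrix.head_cons, div_eq_mul_inv]
      linear_combination (y 1) * hi2
    · show _ / 2 = y 2
      simp only [Fin.zero_eta, Fin.mk_one, Fin.reduceFinMk, Matrix.cons_val_zero, Matrix.cons_val_one, Matrix.head_cons,
        Matrix.cons_val_two, Matrix.tail_cons, div_eq_mul_inv]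
      linear_combination (y 2) * hi2

lemma eEquiv_apply {F : Type*} [Field F] (δ : F) (h1 : δ - 1 ≠ 0) (h2 : (2 : F) ≠ 0)
    (x : Fin 3 → F) :
    eEquiv δ h1 h2 x = ![x 0 / 2 + x 1 / 2 + x 2 * (δ - 1) / 4, x 0 / 2, x 1 / 2] := rfl

/-- The submodule `{w | w 0 = w 1 + w 2}`. -/
def Pb (F : Type*) [Field F] : Submodule F (Fin 3 → F) where
  carrier := {w | w 0 = w 1 + w 2}
  add_mem' := by
    intro x y hx hy
    simp only [Set.mem_setOf_eq] at *
    simp [hx, hy]; ring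
  zero_mem' := by simp
  smul_mem' := by
    intro c x hx
    simp only [Set.mem_setOf_eq] at *
    simp [hx]; ring

lemma mem_Pb {F : Type*} [Field F] (x : Fin 3 → F) : x ∈ Pb F ↔ x 0 = x 1 + x 2 :=
  Iff.rfl

/-- **Proposition (spin iso).** In `𝔖(δ)`, set `a = ½(1 + u) = ![½,½,0]` and
`b = ½(1 + v) = ![½,0,½]`.
(a) If `δ ≠ 1` then `a` and `b` generate `𝔖(δ)`, and `𝔖(δ) ≅ 𝔍((1+δ)/2)` via an
isomorphism sending `𝔞` to `a` and `𝔟` to `b`.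
(b) If `δ = 1` then `⟨⟨a,b⟩⟩ = ⟨a,b⟩` is 2-dimensional, with `a⬝b = ½a + ½b`. -/
theorem spin_iso {F : Type*} [Field F] (hchar : (2 : F) ≠ 0) (δ : F) :
    (δ ≠ 1 →
      genByFun (SmulFun δ) {![2⁻¹, 2⁻¹, 0], ![2⁻¹, 0, 2⁻¹]} = ⊤ ∧
      ∃ e : (Fin 3 → F) ≃ₗ[F] (Fin 3 → F),
        e ![1, 0, 0] = ![2⁻¹, 2⁻¹, 0] ∧
        e ![0, 1, 0] = ![2⁻¹, 0, 2⁻¹] ∧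
        ∀ x y : Fin 3 → F, e (JmulFun ((1 + δ) / 2) x y) = SmulFun δ (e x) (e y)) ∧
    (δ = 1 →
      genByFun (SmulFun δ) {![2⁻¹, 2⁻¹, 0], ![2⁻¹, 0, 2⁻¹]} =
        Submodule.span F {![2⁻¹, 2⁻¹, 0], ![2⁻¹, 0, 2⁻¹]} ∧
      SmulFun δ ![2⁻¹, 2⁻¹, 0] ![2⁻¹, 0, 2⁻¹] =
        (2⁻¹ : F) • ![2⁻¹, 2⁻¹, 0] + (2⁻¹ : F) • ![2⁻¹, 0, 2⁻¹]) := by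
  have h2 : (2 : F) ≠ 0 := hchar
  have hi2 : (2 : F) * 2⁻¹ = 1 := mul_inv_cancel₀ h2
  constructor
  · intro hδ
    have h1 : δ - 1 ≠ 0 := sub_ne_zero.mpr hδ
    have his : (δ - 1) * (δ - 1)⁻¹ = 1 := mul_inv_cancel₀ h1
    constructor
    · rw [eq_top_iff]
      intro x _
      rw [genByFun, Submodule.mem_sInf]
      rintro P ⟨hS, hmul⟩
      have ha : (![2⁻¹, 2⁻¹, 0] : Fin 3 → F) ∈ P := hS (by simp)
      have hb : (![2⁻¹, 0, 2⁻¹] : Fin 3 → F) ∈ P := hS (by simp)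
      have hab : SmulFun δ ![2⁻¹, 2⁻¹, 0] ![2⁻¹, 0, 2⁻¹] ∈ P :=
        hmul _ ha _ hb
      have he0 : (![1, 0, 0] : Fin 3 → F) ∈ P := by
        have key : (![1, 0, 0] : Fin 3 → F) =
            (4 * (δ - 1)⁻¹) • (SmulFun δ ![2⁻¹, 2⁻¹, 0] ![2⁻¹, 0, 2⁻¹]
              - (2⁻¹ : F) • ![2⁻¹, 2⁻¹, 0] - (2⁻¹ : F) • ![2⁻¹, 0, 2⁻¹]) := by
          funext i
          fin_cases i <;>
            simp only [SmulFun, Fin.zero_eta, Fin.mk_one, Fin.reduceFinMk, Matrix.cons_val_zero, Matrix.cons_val_one, Matrix.head_cons,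
              Matrix.cons_val_two, Matrix.tail_cons, Pi.smul_apply, Pi.sub_apply,
              smul_eq_mul, Fin.isValue]
          · linear_combination ((δ-1)⁻¹ - (δ-1)⁻¹*δ + (2)*(2:F)⁻¹*(δ-1)⁻¹
              - (2)*(2:F)⁻¹*(δ-1)⁻¹*δ) * hi2 - his
          · ring
          · ring
        rw [key]
        exact P.smul_mem _ (P.sub_mem (P.sub_mem hab (P.smul_mem _ ha)) (P.smul_mem _ hb))
      have he1 : (![0, 1, 0] : Fin 3 → F) ∈ P := by
        have key : (![0, 1, 0] : Fin 3 → F) = (2 : F) • ![2⁻¹, 2⁻¹, 0] - ![1, 0, 0] := by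
          funext i
          fin_cases i <;>
            simp only [Pi.smul_apply, Pi.sub_apply, smul_eq_mul, Fin.zero_eta, Fin.mk_one, Fin.reduceFinMk, Matrix.cons_val_zero,
              Matrix.cons_val_one, Matrix.head_cons, Matrix.cons_val_two, Matrix.tail_cons,
              Fin.isValue]
          · linear_combination -hi2
          · linear_combination -hi2
          · ring
        rw [key]
        exact P.sub_mem (P.smul_mem _ ha) he0
      have he2 : (![0, 0, 1] : Fin 3 → F) ∈ P := by
        have key : (![0, 0, 1] : Fin 3 → F) = (2 : F) • ![2⁻¹, 0, 2⁻¹] - ![1, 0, 0] := by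
          funext i
          fin_cases i <;>
            simp only [Pi.smul_apply, Pi.sub_apply, smul_eq_mul, Fin.zero_eta, Fin.mk_one, Fin.reduceFinMk, Matrix.cons_val_zero,
              Matrix.cons_val_one, Matrix.head_cons, Matrix.cons_val_two, Matrix.tail_cons,
              Fin.isValue]
          · linear_combination -hi2
          · ring
          · linear_combination -hi2
        rw [key]
        exact P.sub_mem (P.smul_mem _ hb) he0
      have hx : x = x 0 • ![1, 0, 0] + x 1 • ![0, 1, 0] + x 2 • ![0, 0, 1] := by
        funext i
        fin_cases i <;> simp
      rw [hx]
      exact P.add_mem (P.add_mem (P.smul_mem _ he0) (P.smul_mem _ he1)) (P.smul_mem _ he2)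
    · refine ⟨eEquiv δ h1 h2, ?_, ?_, ?_⟩
      · rw [eEquiv_apply]
        funext i
        fin_cases i <;>
          simp only [Fin.zero_eta, Fin.mk_one, Fin.reduceFinMk, Matrix.cons_val_zero, Matrix.cons_val_one, Matrix.head_cons,
            Matrix.cons_val_two, Matrix.tail_cons, Fin.isValue] <;>
          ring
      · rw [eEquiv_apply]
        funext i
        fin_cases i <;>
          simp only [Fin.zero_eta, Fin.mk_one, Fin.reduceFinMk, Matrix.cons_val_zero, Matrix.cons_val_one, Matrix.head_cons,
            Matrix.cons_val_two, Matrix.tail_cons, Fin.isValue] <;>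
          ring
      · intro x y
        simp only [eEquiv_apply]
        funext i
        fin_cases i <;>
          simp only [JmulFun, SmulFun, Fin.zero_eta, Fin.mk_one, Fin.reduceFinMk, Matrix.cons_val_zero, Matrix.cons_val_one,
            Matrix.head_cons, Matrix.cons_val_two, Matrix.tail_cons, Fin.isValue,
            div_eq_mul_inv, h4inv]
        · linear_combination (-(2:F)⁻¹*x 1*y 1 - (2:F)⁻¹*x 0*y 0 + (2:F)⁻¹*(2:F)⁻¹*x 2*y 1
            + (2:F)⁻¹*(2:F)⁻¹*x 2*y 0 + (2:F)⁻¹*(2:F)⁻¹*x 1*y 2 + (2:F)⁻¹*(2:F)⁻¹*x 0*y 2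
            - (2:F)⁻¹*(2:F)⁻¹*(2:F)⁻¹*x 2*y 2 + (2:F)⁻¹*(2:F)⁻¹*(2:F)⁻¹*δ*x 2*y 2) * hi2
        · linear_combination (-(2:F)⁻¹*x 0*y 0 + (2:F)⁻¹*(2:F)⁻¹*x 2*y 0
            + (2:F)⁻¹*(2:F)⁻¹*x 0*y 2) * hi2
        · linear_combination (-(2:F)⁻¹*x 1*y 1 + (2:F)⁻¹*(2:F)⁻¹*x 2*y 1
            + (2:F)⁻¹*(2:F)⁻¹*x 1*y 2) * hi2
  · intro hδ
    subst hδ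
    have hamem : (![2⁻¹, 2⁻¹, 0] : Fin 3 → F) ∈ Pb F := by
      rw [mem_Pb]; simp
    have hbmem : (![2⁻¹, 0, 2⁻¹] : Fin 3 → F) ∈ Pb F := by
      rw [mem_Pb]; simp
    have hsub : ({![2⁻¹, 2⁻¹, 0], ![2⁻¹, 0, 2⁻¹]} : Set (Fin 3 → F)) ⊆ Pb F := by
      rintro w hw
      rcases hw with rfl | rfl
      · exact hamem
      · exact hbmem
    have hclosed : ∀ x ∈ Pb F, ∀ y ∈ Pb F, SmulFun 1 x y ∈ Pb F := by
      intro x hx y hy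
      rw [mem_Pb] at hx hy ⊢
      simp only [SmulFun, Fin.zero_eta, Fin.mk_one, Fin.reduceFinMk, Matrix.cons_val_zero, Matrix.cons_val_one, Matrix.head_cons,
        Matrix.cons_val_two, Matrix.tail_cons, Fin.isValue]
      linear_combination (y 0 - y 1 - y 2) * hx
    have hspanPb :
        Submodule.span F ({![2⁻¹, 2⁻¹, 0], ![2⁻¹, 0, 2⁻¹]} : Set (Fin 3 → F)) = Pb F := by
      apply le_antisymm
      · rw [Submodule.span_le]
        exact hsub
      · intro w hw
        rw [mem_Pb] at hw
        have key : w = (2 * w 1) • ![2⁻¹, 2⁻¹, 0] + (2 * w 2) • ![2⁻¹, 0, 2⁻¹] := by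
          funext i
          fin_cases i <;>
            simp only [Pi.add_apply, Pi.smul_apply, smul_eq_mul, Fin.zero_eta, Fin.mk_one, Fin.reduceFinMk, Matrix.cons_val_zero,
              Matrix.cons_val_one, Matrix.head_cons, Matrix.cons_val_two, Matrix.tail_cons,
              Fin.isValue]
          · linear_combination hw - (w 1 + w 2) * hi2
          · linear_combination (- w 1) * hi2
          · linear_combination (- w 2) * hi2
        rw [key]
        exact Submodule.add_mem _
          (Submodule.smul_mem _ _ (Submodule.subset_span (by simp)))
          (Submodule.smul_mem _ _ (Submodule.subset_span (by simp)))
    constructor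
    · apply le_antisymm
      · rw [hspanPb]
        exact sInf_le ⟨hsub, hclosed⟩
      · rw [Submodule.span_le]
        intro w hw
        show w ∈ genByFun (SmulFun 1) {![2⁻¹, 2⁻¹, 0], ![2⁻¹, 0, 2⁻¹]}
        rw [genByFun, Submodule.mem_sInf]
        intro P hP
        exact hP.1 hw
    · funext i
      fin_cases i <;>
        simp only [SmulFun, Pi.add_apply, Pi.smul_apply, smul_eq_mul, Fin.zero_eta, Fin.mk_one, Fin.reduceFinMk, Matrix.cons_val_zero,
          Matrix.cons_val_one, Matrix.head_cons, Matrix.cons_val_two, Matrix.tail_cons,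
          Fin.isValue] <;>
        ring
end

section
/- Let F be a field with char F ≠ 2, α ∈ F with α ∉ {0,1}, and let ζ ∈ F be a root of x² − (4α−2)x + 1. Set μ = −(1+ζ)/4, ν = −(1+ζ⁻¹)/4, and in 𝔍(α) set 𝔡 = μ𝔞 + 𝔞·𝔟 + ν𝔟 and 𝔢 = ν𝔞 + 𝔞·𝔟 + μ𝔟. Then 𝔡·𝔡 = 0, 𝔢·𝔢 = 0, and (𝔡,𝔢) = α(α−1)² for the Frobenius form on 𝔍(α). -/
namespace JordanHalf

variable {F : Type*} [Field F]

/-- The Frobenius form of `𝔍(α)`, determined by `(𝔞,𝔞) = (𝔟,𝔟) = 1`, `(𝔞,𝔟) = α`,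
`(𝔞,σ) = (𝔟,σ) = (α−1)/2`, `(σ,σ) = (α−1)²/2`. -/
def JFormFun (α : F) (u v : Fin 3 → F) : F :=
  u 0 * v 0 + u 1 * v 1 + α * (u 0 * v 1 + u 1 * v 0) +
    (α - 1) / 2 * (u 0 * v 2 + u 2 * v 0 + u 1 * v 2 + u 2 * v 1) +
    (α - 1) ^ 2 / 2 * (u 2 * v 2)

end JordanHalf

open JordanHalf

set_option maxHeartbeats 1000000 in
/-- **Lemma.** Let `α ∉ {0,1}`, let `ζ` be a root of `x² − (4α−2)x + 1`, and set
`μ = −(1+ζ)/4`, `ν = −(1+ζ⁻¹)/4`, `𝔡 = μ𝔞 + 𝔞⬝𝔟 + ν𝔟`, `𝔢 = ν𝔞 + 𝔞⬝𝔟 + μ𝔟` in `𝔍(α)`.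
Then `𝔡⬝𝔡 = 0 = 𝔢⬝𝔢` and `(𝔡,𝔢) = α(α−1)²`. -/
theorem nilpotents_of_J {F : Type*} [Field F] (hchar : (2 : F) ≠ 0)
    (α : F) (hα0 : α ≠ 0) (hα1 : α ≠ 1)
    (ζ : F) (hζ : ζ ^ 2 - (4 * α - 2) * ζ + 1 = 0)
    (μ ν : F) (hμ : μ = -(1 + ζ) / 4) (hν : ν = -(1 + ζ⁻¹) / 4)
    (d e : Fin 3 → F)
    (hd : d = μ • ![1, 0, 0] + JmulFun α ![1, 0, 0] ![0, 1, 0] + ν • ![0, 1, 0])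
    (he : e = ν • ![1, 0, 0] + JmulFun α ![1, 0, 0] ![0, 1, 0] + μ • ![0, 1, 0]) :
    JmulFun α d d = 0 ∧ JmulFun α e e = 0 ∧ JFormFun α d e = α * (α - 1) ^ 2 := by
  have hζ0 : ζ ≠ 0 := by
    rintro rfl
    norm_num at hζ
  have hinv : ζ⁻¹ = 4 * α - 2 - ζ := by
    field_simp
    first
    | linear_combination hζ
    | linear_combination -hζ
    | linear_combination 2 * hζ
    | linear_combination -2 * hζ
  have hν' : ν = -(4 * α - 1 - ζ) / 4 := by rw [hν, hinv]; ring
  have h4 : (4 : F) ≠ 0 := by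
    have := pow_ne_zero 2 hchar; norm_num at this; exact this
  have h4i : (4 : F) * 4⁻¹ = 1 := mul_inv_cancel₀ h4
  have hd0 : d 0 = (1 - ζ) / 4 := by
    rw [hd]; simp [JmulFun, hμ]; field_simp; first
    | ring1
    | linear_combination h4i
    | linear_combination -h4i
    | linear_combination 2 * h4i
    | linear_combination -2 * h4i
  have hd1 : d 1 = (3 - 4 * α + ζ) / 4 := by
    rw [hd]; simp [JmulFun, hν']; field_simp; first
    | ring1
    | linear_combination h4i
    | linear_combination -h4i
    | linear_combination 2 * h4i
    | linear_combination -2 * h4i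
  have hd2 : d 2 = 1 := by rw [hd]; simp [JmulFun]; try ring
  have he0 : e 0 = (3 - 4 * α + ζ) / 4 := by
    rw [he]; simp [JmulFun, hν']; field_simp; first
    | ring1
    | linear_combination h4i
    | linear_combination -h4i
    | linear_combination 2 * h4i
    | linear_combination -2 * h4i
  have he1 : e 1 = (1 - ζ) / 4 := by
    rw [he]; simp [JmulFun, hμ]; field_simp; first
    | ring1
    | linear_combination h4i
    | linear_combination -h4i
    | linear_combination 2 * h4i
    | linear_combination -2 * h4i
  have he2 : e 2 = 1 := by rw [he]; simp [JmulFun]; try ring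
  have h8 : (8 : F) ≠ 0 := by
    have := pow_ne_zero 3 hchar; norm_num at this; exact this
  have h16 : (16 : F) ≠ 0 := by
    have := pow_ne_zero 4 hchar; norm_num at this; exact this
  have h32 : (32 : F) ≠ 0 := by
    have := pow_ne_zero 5 hchar; norm_num at this; exact this
  have h64 : (64 : F) ≠ 0 := by
    have := pow_ne_zero 6 hchar; norm_num at this; exact this
  have h128 : (128 : F) ≠ 0 := by
    have := pow_ne_zero 7 hchar; norm_num at this; exact this
  have h256 : (256 : F) ≠ 0 := by
    have := pow_ne_zero 8 hchar; norm_num at this; exact this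
  have h512 : (512 : F) ≠ 0 := by
    have := pow_ne_zero 9 hchar; norm_num at this; exact this
  have h1024 : (1024 : F) ≠ 0 := by
    have := pow_ne_zero 10 hchar; norm_num at this; exact this
  have h2048 : (2048 : F) ≠ 0 := by
    have := pow_ne_zero 11 hchar; norm_num at this; exact this
  have h4096 : (4096 : F) ≠ 0 := by
    have := pow_ne_zero 12 hchar; norm_num at this; exact this
  have h8192 : (8192 : F) ≠ 0 := by
    have := pow_ne_zero 13 hchar; norm_num at this; exact this
  have h16384 : (16384 : F) ≠ 0 := by
    have := pow_ne_zero 14 hchar; norm_num at this; exact this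
  have h32768 : (32768 : F) ≠ 0 := by
    have := pow_ne_zero 15 hchar; norm_num at this; exact this
  refine ⟨?_, ?_, ?_⟩
  · simp only [JmulFun, Matrix.cons_eq_zero_iff]
    rw [hd0, hd1, hd2]
    refine ⟨?_, ?_, ?_, ?_⟩
    · field_simp
      first
      | ring1
      | linear_combination -4 * hζ
      | linear_combination 4 * hζ
      | linear_combination -8 * hζ
      | linear_combination 8 * hζ
      | linear_combination -2 * hζ
      | linear_combination 2 * hζ
      | linear_combination -hζ
      | linear_combination hζ
      | linear_combination -16 * hζ
      | linear_combination 16 * hζ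
      | linear_combination -32 * hζ
      | linear_combination 32 * hζ
      | linear_combination -36 * hζ
      | linear_combination 36 * hζ
      | linear_combination -40 * hζ
      | linear_combination 40 * hζ
    · field_simp
      first
      | ring1
      | linear_combination -4 * hζ
      | linear_combination 4 * hζ
      | linear_combination -8 * hζ
      | linear_combination 8 * hζ
      | linear_combination -2 * hζ
      | linear_combination 2 * hζ
      | linear_combination -hζ
      | linear_combination hζ
      | linear_combination -16 * hζ
      | linear_combination 16 * hζ
      | linear_combination -32 * hζ
      | linear_combination 32 * hζ
      | linear_combination -36 * hζ
      | linear_combination 36 * hζ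
      | linear_combination -40 * hζ
      | linear_combination 40 * hζ
    · field_simp
      first
      | ring1
      | linear_combination -4 * hζ
      | linear_combination 4 * hζ
      | linear_combination -8 * hζ
      | linear_combination 8 * hζ
      | linear_combination -2 * hζ
      | linear_combination 2 * hζ
      | linear_combination -hζ
      | linear_combination hζ
      | linear_combination -16 * hζ
      | linear_combination 16 * hζ
      | linear_combination -32 * hζ
      | linear_combination 32 * hζ
      | linear_combination -36 * hζ
      | linear_combination 36 * hζ
      | linear_combination -40 * hζ
      | linear_combination 40 * hζ
    · funext i
      exact absurd i.2 (by simp)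
  · simp only [JmulFun, Matrix.cons_eq_zero_iff]
    rw [he0, he1, he2]
    refine ⟨?_, ?_, ?_, ?_⟩
    · field_simp
      first
      | ring1
      | linear_combination -4 * hζ
      | linear_combination 4 * hζ
      | linear_combination -8 * hζ
      | linear_combination 8 * hζ
      | linear_combination -2 * hζ
      | linear_combination 2 * hζ
      | linear_combination -hζ
      | linear_combination hζ
      | linear_combination -16 * hζ
      | linear_combination 16 * hζ
      | linear_combination -32 * hζ
      | linear_combination 32 * hζ
      | linear_combination -36 * hζ
      | linear_combination 36 * hζ
      | linear_combination -40 * hζ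
      | linear_combination 40 * hζ
    · field_simp
      first
      | ring1
      | linear_combination -4 * hζ
      | linear_combination 4 * hζ
      | linear_combination -8 * hζ
      | linear_combination 8 * hζ
      | linear_combination -2 * hζ
      | linear_combination 2 * hζ
      | linear_combination -hζ
      | linear_combination hζ
      | linear_combination -16 * hζ
      | linear_combination 16 * hζ
      | linear_combination -32 * hζ
      | linear_combination 32 * hζ
      | linear_combination -36 * hζ
      | linear_combination 36 * hζ
      | linear_combination -40 * hζ
      | linear_combination 40 * hζ
    · field_simp
      first
      | ring1
      | linear_combination -4 * hζ
      | linear_combination 4 * hζ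
      | linear_combination -8 * hζ
      | linear_combination 8 * hζ
      | linear_combination -2 * hζ
      | linear_combination 2 * hζ
      | linear_combination -hζ
      | linear_combination hζ
      | linear_combination -16 * hζ
      | linear_combination 16 * hζ
      | linear_combination -32 * hζ
      | linear_combination 32 * hζ
      | linear_combination -36 * hζ
      | linear_combination 36 * hζ
      | linear_combination -40 * hζ
      | linear_combination 40 * hζ
    · funext i
      exact absurd i.2 (by simp)
  · simp only [JFormFun]
    rw [hd0, hd1, hd2, he0, he1, he2]
    field_simp
    first
    | ring1
    | linear_combination (4 * α - 4) * hζ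
    | linear_combination (4 - 4 * α) * hζ
    | linear_combination (8 * α - 8) * hζ
    | linear_combination (8 - 8 * α) * hζ
    | linear_combination (2 * α - 2) * hζ
    | linear_combination (2 - 2 * α) * hζ
    | linear_combination (α - 1) * hζ
    | linear_combination (1 - α) * hζ
    | linear_combination (32 * α - 32) * hζ
    | linear_combination (32 - 32 * α) * hζ
    | linear_combination (16 * α - 16) * hζ
    | linear_combination (16 - 16 * α) * hζ
end

section
/- Let F be a field with char F ≠ 2. An element u = λ₁𝔞 + λ₂𝔟 + λ₃σ of 𝔍(1) satisfies u·u = u if and only if λ₁ = λ₂ = λ₃ = 0, or λ₁ + λ₂ = 1 and λ₃ = 2λ₁λ₂. In particular, the nonzero idempotents of 𝔍(1) form the one-parameter family {λ𝔞 + (1−λ)𝔟 + 2λ(1−λ)σ : λ ∈ F}. -/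
open JordanHalf

/-! Since `σ` annihilates `𝔍(1)`, the square of `a𝔞 + b𝔟 + cσ` is
`a(a+b)𝔞 + b(a+b)𝔟 + 2abσ`. Idempotency thus says that `a + b = 1` unless `a = b = 0`,
and then fixes `c = 2ab`. -/

theorem mul_add_eq_self_and_iff {R : Type*} [Ring R] [NoZeroDivisors R] {a b : R} :
    a * (a + b) = a ∧ b * (a + b) = b ↔ (a = 0 ∧ b = 0) ∨ a + b = 1 := by
  rw [mul_right_eq_self₀, mul_right_eq_self₀]
  tauto

theorem vec3_eq_zero_iff {α : Type*} [Zero α] (a b c : α) :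
    ![a, b, c] = 0 ↔ a = 0 ∧ b = 0 ∧ c = 0 := by
  simp [← Matrix.cons_zero_zero, Matrix.vecCons_inj]

namespace JordanHalf

variable {F : Type*} [Field F]

theorem JmulFun_one_self (h2 : (2 : F) ≠ 0) (a b c : F) :
    JmulFun 1 ![a, b, c] ![a, b, c] = ![a * (a + b), b * (a + b), 2 * a * b] := by
  have hcross : (a * b + b * a) / 2 = a * b := by field_simp; ring
  simp only [JmulFun, Matrix.cons_val_zero, Matrix.cons_val_one, Matrix.cons_val_two,
    Matrix.head_cons, Matrix.tail_cons, sub_self, zero_div, zero_mul, add_zero, hcross]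
  exact Matrix.vec3_eq (by ring) (by ring) (by ring)

theorem JmulFun_one_self_eq_self_iff (h2 : (2 : F) ≠ 0) (a b c : F) :
    JmulFun 1 ![a, b, c] ![a, b, c] = ![a, b, c] ↔
      (a = 0 ∧ b = 0 ∧ c = 0) ∨ (a + b = 1 ∧ c = 2 * a * b) := by
  simp only [JmulFun_one_self h2, Matrix.vecCons_inj, and_true, ← and_assoc,
    mul_add_eq_self_and_iff]
  constructor
  · rintro ⟨⟨rfl, rfl⟩ | hsum, rfl⟩
    · simp
    · exact Or.inr ⟨hsum, rfl⟩
  · rintro (⟨⟨rfl, rfl⟩, rfl⟩ | ⟨hsum, rfl⟩)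
    · simp
    · exact ⟨Or.inr hsum, rfl⟩

theorem exists_vec3_eq_one_sub_iff (a b c : F) :
    (∃ l : F, ![a, b, c] = ![l, 1 - l, 2 * l * (1 - l)]) ↔ a + b = 1 ∧ c = 2 * a * b := by
  simp only [Matrix.vecCons_inj, and_true]
  constructor
  · rintro ⟨l, rfl, rfl, rfl⟩
    exact ⟨add_sub_cancel a 1, rfl⟩
  · rintro ⟨hsum, rfl⟩
    obtain rfl : b = 1 - a := eq_sub_of_add_eq' hsum
    exact ⟨a, rfl, rfl, rfl⟩

end JordanHalf

/-- **Lemma (idempotents of 𝔍(1)).** An element `u = λ₁𝔞 + λ₂𝔟 + λ₃σ` of `𝔍(1)` is an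
idempotent if and only if `λ₁ = λ₂ = λ₃ = 0`, or `λ₁ + λ₂ = 1` and `λ₃ = 2λ₁λ₂`; in
particular the nonzero idempotents form the one-parameter family
`λ𝔞 + (1−λ)𝔟 + 2λ(1−λ)σ`, `λ ∈ F`. -/
theorem idempotents_of_J1 {F : Type*} [Field F] (hchar : (2 : F) ≠ 0) :
    (∀ l₁ l₂ l₃ : F,
      (JmulFun (1 : F) ![l₁, l₂, l₃] ![l₁, l₂, l₃] = ![l₁, l₂, l₃] ↔
        (l₁ = 0 ∧ l₂ = 0 ∧ l₃ = 0) ∨ (l₁ + l₂ = 1 ∧ l₃ = 2 * l₁ * l₂))) ∧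
    {w : Fin 3 → F | JmulFun (1 : F) w w = w ∧ w ≠ 0} =
      {w : Fin 3 → F | ∃ l : F, w = ![l, 1 - l, 2 * l * (1 - l)]} := by
  refine ⟨JmulFun_one_self_eq_self_iff hchar, ?_⟩
  ext w
  obtain ⟨a, b, c, rfl⟩ : ∃ a b c : F, w = ![a, b, c] :=
    ⟨w 0, w 1, w 2, (FinVec.etaExpand_eq w).symm⟩
  simp only [Set.mem_ofPred_eq, JmulFun_one_self_eq_self_iff hchar, ne_eq, vec3_eq_zero_iff,
    exists_vec3_eq_one_sub_iff]
  constructor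
  · rintro ⟨hzero | hone, hne⟩
    · exact absurd hzero hne
    · exact hone
  · rintro hone
    refine ⟨Or.inr hone, ?_⟩
    rintro ⟨rfl, rfl, -⟩
    simp at hone
end

section
/- Let F be a field with char F ≠ 2. An element u = λ₁𝔞 + λ₂𝔟 + λ₃σ of 𝔍(0) satisfies u·u = u if and only if either λ₁ = λ₂ = 0 and λ₃ ∈ {0, −2}, or λ₁ + λ₂ = λ₃ + 1 and (λ₁ − λ₂)² = 1. In particular, the idempotents of 𝔍(0) other than 0 and the identity −2σ form two disjoint one-parameter families, given by the linear conditions λ₁ − λ₂ = 1, λ₁ + λ₂ − λ₃ = 1 and λ₁ − λ₂ = −1, λ₁ + λ₂ − λ₃ = 1, with 𝔞 in the first family and 𝔟 in the second. -/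
open JordanHalf

theorem key_iff {F : Type*} [Field F] (hchar : (2 : F) ≠ 0) (l₁ l₂ l₃ : F) :
    JmulFun (0 : F) ![l₁, l₂, l₃] ![l₁, l₂, l₃] = ![l₁, l₂, l₃] ↔
      (l₁ = 0 ∧ l₂ = 0 ∧ (l₃ = 0 ∨ l₃ = -2)) ∨
      (l₁ + l₂ = l₃ + 1 ∧ (l₁ - l₂) ^ 2 = 1) := by
  constructor
  · intro h
    have h0 := congrFun h 0
    have h1 := congrFun h 1
    have h2 := congrFun h 2
    simp [JmulFun] at h0 h1 h2
    field_simp at h0 h1 h2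
    have hA : (2 * l₁) * (l₁ + l₂ - l₃ - 1) = 0 := by linear_combination h0
    have hB : (2 * l₂) * (l₁ + l₂ - l₃ - 1) = 0 := by linear_combination h1
    rcases mul_eq_zero.1 hA with h1z | hK
    · have h1z : l₁ = 0 := by
        rcases mul_eq_zero.1 h1z with h | h
        · exact absurd h hchar
        · exact h
      rcases mul_eq_zero.1 hB with h2z | hK
      · have h2z : l₂ = 0 := by
          rcases mul_eq_zero.1 h2z with h | h
          · exact absurd h hchar
          · exact h
        left
        refine ⟨h1z, h2z, ?_⟩
        have hC : l₃ * (l₃ + 2) = 0 := by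
          linear_combination -h2 + 4 * l₂ * h1z
        rcases mul_eq_zero.1 hC with h | h
        · exact Or.inl h
        · exact Or.inr (by linear_combination h)
      · right
        exact ⟨by linear_combination hK, by linear_combination -h2 + (l₁ + l₂ + l₃ + 1) * hK⟩
    · right
      exact ⟨by linear_combination hK, by linear_combination -h2 + (l₁ + l₂ + l₃ + 1) * hK⟩
  · rintro (⟨rfl, rfl, (rfl | rfl)⟩ | ⟨h1, h2⟩)
    · funext i; fin_cases i <;> simp [JmulFun]
    · funext i; fin_cases i <;> simp [JmulFun] <;> field_simp
    · funext i; fin_cases i <;> simp [JmulFun] <;> field_simp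
      · linear_combination 2 * l₁ * h1
      · linear_combination 2 * l₂ * h1
      · linear_combination (l₁ + l₂ + l₃ + 1) * h1 - h2

/-- **Proposition (idempotents of 𝔍(0)).** An element `u = λ₁𝔞 + λ₂𝔟 + λ₃σ` of `𝔍(0)`
is an idempotent if and only if `λ₁ = λ₂ = 0` and `λ₃ ∈ {0, −2}`, or
`λ₁ + λ₂ = λ₃ + 1` and `(λ₁ − λ₂)² = 1`; in particular the idempotents other than `0`
and the identity `−2σ` form two disjoint one-parameter families, cut out by the linear
conditions `λ₁ − λ₂ = 1, λ₁ + λ₂ − λ₃ = 1` and `λ₁ − λ₂ = −1, λ₁ + λ₂ − λ₃ = 1`, with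
`𝔞` in the first family and `𝔟` in the second. -/
theorem idempotents_of_J0 {F : Type*} [Field F] (hchar : (2 : F) ≠ 0) :
    (∀ l₁ l₂ l₃ : F,
      (JmulFun (0 : F) ![l₁, l₂, l₃] ![l₁, l₂, l₃] = ![l₁, l₂, l₃] ↔
        (l₁ = 0 ∧ l₂ = 0 ∧ (l₃ = 0 ∨ l₃ = -2)) ∨
        (l₁ + l₂ = l₃ + 1 ∧ (l₁ - l₂) ^ 2 = 1))) ∧
    {w : Fin 3 → F | JmulFun (0 : F) w w = w ∧ w ≠ 0 ∧ w ≠ (-2 : F) • ![0, 0, 1]} =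
      {w : Fin 3 → F | w 0 - w 1 = 1 ∧ w 0 + w 1 - w 2 = 1} ∪
        {w : Fin 3 → F | w 0 - w 1 = -1 ∧ w 0 + w 1 - w 2 = 1} ∧
    ({w : Fin 3 → F | w 0 - w 1 = 1 ∧ w 0 + w 1 - w 2 = 1} ∩
        {w : Fin 3 → F | w 0 - w 1 = -1 ∧ w 0 + w 1 - w 2 = 1} = ∅) ∧
    (![1, 0, 0] : Fin 3 → F) ∈ {w : Fin 3 → F | w 0 - w 1 = 1 ∧ w 0 + w 1 - w 2 = 1} ∧
    (![0, 1, 0] : Fin 3 → F) ∈ {w : Fin 3 → F | w 0 - w 1 = -1 ∧ w 0 + w 1 - w 2 = 1} := by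
  refine ⟨fun l₁ l₂ l₃ => key_iff hchar l₁ l₂ l₃, ?_, ?_, ?_, ?_⟩
  · ext w
    have hw : w = ![w 0, w 1, w 2] := by
      funext i; fin_cases i <;> rfl
    simp only [Set.mem_setOf_eq, Set.mem_union]
    constructor
    · rintro ⟨hidem, hne0, hneid⟩
      rw [hw] at hidem
      rcases (key_iff hchar (w 0) (w 1) (w 2)).1 hidem with ⟨h1, h2, (h3 | h3)⟩ | ⟨h1, h2⟩
      · refine absurd ?_ hne0
        funext i; fin_cases i <;> simp [h1, h2, h3]
      · refine absurd ?_ hneid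
        funext i; fin_cases i <;> simp [h1, h2, h3]
      · have : (w 0 - w 1 - 1) * (w 0 - w 1 + 1) = 0 := by linear_combination h2
        rcases mul_eq_zero.1 this with h | h
        · exact Or.inl ⟨by linear_combination h, by linear_combination h1⟩
        · exact Or.inr ⟨by linear_combination h, by linear_combination h1⟩
    · intro h
      have hidem : JmulFun (0 : F) w w = w := by
        rw [hw]
        refine (key_iff hchar (w 0) (w 1) (w 2)).2 (Or.inr ?_)
        rcases h with ⟨h1, h2⟩ | ⟨h1, h2⟩
        · exact ⟨by linear_combination h2, by rw [h1]; ring⟩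
        · exact ⟨by linear_combination h2, by rw [h1]; ring⟩
      refine ⟨hidem, ?_, ?_⟩
      · intro h0eq
        have e0 : w 0 = 0 := by rw [h0eq]; rfl
        have e1 : w 1 = 0 := by rw [h0eq]; rfl
        rcases h with ⟨ha, _⟩ | ⟨ha, _⟩ <;> rw [e0, e1] at ha
        · exact one_ne_zero (by linear_combination -ha)
        · exact hchar (by linear_combination 2 * ha)
      · intro hid
        have h0 : w 0 = 0 := by rw [hid]; simp
        have h1 : w 1 = 0 := by rw [hid]; simp
        rcases h with ⟨ha, _⟩ | ⟨ha, _⟩ <;> rw [h0, h1] at ha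
        · exact one_ne_zero (by linear_combination -ha)
        · exact hchar (by linear_combination 2 * ha)
  · ext w
    simp only [Set.mem_inter_iff, Set.mem_setOf_eq, Set.mem_empty_iff_false, iff_false]
    rintro ⟨⟨h1, _⟩, ⟨h2, _⟩⟩
    exact hchar (by linear_combination h2 - h1)
  · constructor <;> simp
  · constructor <;> simp
end
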